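/- arXiv:1902.08280 — 4 statements merged into one kernel-verified Lean document; each statement's English description precedes it below -/
import Mathlib

section
/- Let n ≥ 1, let g : ℝⁿ → ℝⁿ and f : ℝⁿ → ℝⁿ be C^∞ vector fields, let I ⊆ ℝ be an open interval, and let x : I → ℝⁿ be a C^∞ curve satisfying x'(t) = g(x(t)) for all t ∈ I. Define M : ℕ → I → ℝⁿ recursively by M₀(t) = f(x(t)) and M_{j+1}(t) = Dg(x(t))(M_j(t)) − (M_j)'(t). Then for every k ∈ ℕ and every t ∈ I, (ad_g^k f)(x(t)) = (−1)^k · M_k(t). -/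
open VectorField

/-- Iterated Lie bracket (adjoint action): `adIter g f 0 = f`,
`adIter g f (k+1) = [g, adIter g f k]`. -/
noncomputable def adIter {E : Type*} [NormedAddCommGroup E] [NormedSpace ℝ E]
    (g f : E → E) : ℕ → E → E
  | 0 => f
  | k + 1 => lieBracket ℝ g (adIter g f k)

lemma contDiff_adIter {E : Type*} [NormedAddCommGroup E] [NormedSpace ℝ E]
    {g f : E → E} (hg : ContDiff ℝ (⊤ : ℕ∞) g) (hf : ContDiff ℝ (⊤ : ℕ∞) f) (k : ℕ) :
    ContDiff ℝ (⊤ : ℕ∞) (adIter g f k) := by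
  induction k with
  | zero => exact hf
  | succ k ih =>
    exact hg.lieBracket_vectorField ih (by simp)

/-- Along a smooth trajectory of `ẋ = g(x)`, the iterated bracket
`ad_g^k f` equals `(-1)^k` times the `k`-th iterate of the operator `A(t) - d/dt`
applied to `f ∘ x`, where `A(t) = Dg(x(t))`. -/
theorem adIter_along_trajectory
    (n : ℕ) (hn : 1 ≤ n)
    (g f : EuclideanSpace ℝ (Fin n) → EuclideanSpace ℝ (Fin n))
    (hg : ContDiff ℝ (⊤ : ℕ∞) g) (hf : ContDiff ℝ (⊤ : ℕ∞) f)
    (a b : ℝ) (x : ℝ → EuclideanSpace ℝ (Fin n))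
    (hxsmooth : ContDiffOn ℝ (⊤ : ℕ∞) x (Set.Ioo a b))
    (hx : ∀ t ∈ Set.Ioo a b, HasDerivAt x (g (x t)) t)
    (M : ℕ → ℝ → EuclideanSpace ℝ (Fin n))
    (hM0 : ∀ t ∈ Set.Ioo a b, M 0 t = f (x t))
    (hMsucc : ∀ j, ∀ t ∈ Set.Ioo a b,
      M (j + 1) t = fderiv ℝ g (x t) (M j t) - deriv (M j) t) :
    ∀ k : ℕ, ∀ t ∈ Set.Ioo a b,
      adIter g f k (x t) = ((-1 : ℝ)) ^ k • M k t := by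
  intro k
  induction k with
  | zero =>
    intro t ht
    simp [adIter, hM0 t ht]
  | succ k ih =>
    intro t ht
    -- M k t = (-1)^k • adIter g f k (x t)
    have hMk : ∀ s ∈ Set.Ioo a b, M k s = ((-1 : ℝ)) ^ k • adIter g f k (x s) := by
      intro s hs
      have := ih s hs
      rw [this, smul_smul, ← pow_add]
      have : ((-1 : ℝ)) ^ (k + k) = 1 := by
        rw [← two_mul, pow_mul]; norm_num
      rw [this, one_smul]
    have hsmooth := contDiff_adIter hg hf k
    -- derivative of s ↦ adIter g f k (x s) at t
    have hcomp : HasDerivAt (fun s => adIter g f k (x s))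
        (fderiv ℝ (adIter g f k) (x t) (g (x t))) t := by
      exact (hsmooth.differentiable (by simp) (x t)).hasFDerivAt.comp_hasDerivAt t (hx t ht)
    -- M k agrees with (-1)^k • adIter∘x near t
    have heq : M k =ᶠ[nhds t] fun s => ((-1 : ℝ)) ^ k • adIter g f k (x s) := by
      filter_upwards [isOpen_Ioo.mem_nhds ht] with s hs using hMk s hs
    have hderivMk : deriv (M k) t
        = ((-1 : ℝ)) ^ k • fderiv ℝ (adIter g f k) (x t) (g (x t)) := by
      rw [heq.deriv_eq]
      exact (hcomp.const_smul (((-1 : ℝ)) ^ k)).deriv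
    rw [hMsucc k t ht, hderivMk, hMk t ht]
    show lieBracket ℝ g (adIter g f k) (x t) = _
    rw [lieBracket_eq]
    simp only [map_smul, smul_sub, smul_smul, ← pow_succ']
    have hc : ((-1 : ℝ)) ^ (k + 1) * (-1) ^ k = -1 := by
      rw [← pow_add, show k + 1 + k = 2 * k + 1 by ring, pow_succ, pow_mul]; norm_num
    rw [hc, neg_smul, neg_smul, one_smul, one_smul, sub_neg_eq_add]
    abel
end

section
/- Let n ≥ 2, let f₀, f₁, …, f_{n−1} : ℝⁿ → ℝⁿ be C^∞ vector fields, k ∈ {1,…,n−1}, x₀ ∈ ℝⁿ, u₀ ∈ ℝ^{n−1}, and set g = f₀ + Σ_{i=1}^{n−1} u₀ᵢ fᵢ. Assume the n vectors f₁(x₀), …, f_{n−1}(x₀), [g, f_k](x₀) span ℝⁿ. Let U be an open neighborhood of x₀ and ψ₀ : U → ℝ^{n−1} a C^∞ map such that Dψ₀(x₀) : ℝⁿ → ℝ^{n−1} is surjective and Dψ₀(y)(f_k(y)) = 0 for all y ∈ U. Let û₀ ∈ ℝ^{n−2} be obtained from u₀ by deleting its k-th entry, and define ψ₁ : U × ℝ^{n−2}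 → ℝ^{n−1} by ψ₁(x, û) = Dψ₀(x)( f₀(x) + Σ_{j∈{1,…,n−1}, j≠k} û_j f_j(x) ). Then the Fréchet derivative at (x₀, û₀) of the map (x, û) ↦ (ψ₀(x), ψ₁(x, û)) is a linear isomorphism from ℝⁿ × ℝ^{n−2} onto ℝ^{n−1} × ℝ^{n−1}. -/
open ContinuousLinearMap Module

set_option maxHeartbeats 1000000 in
/-- Under the generic condition
`span{f₁(x₀), …, f_{n-1}(x₀), [g, f_k](x₀)} = ℝⁿ`, if `ψ₀` is a vector of `n-1` first
integrals of `f k` on `U` with `Dψ₀(x₀)` surjective, then the map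
`(x, uh) ↦ (ψ₀(x), ψ₁(x, uh))` (with `ψ₁(x,uh) = Dψ₀(x)(f₀(x) + Σ_{j≠k} uhⱼ fⱼ(x))`)
has an invertible Fréchet derivative at `(x₀, uh₀)`. -/
theorem flat_output_first_stage_isomorphism
    (n : ℕ) (hn : 2 ≤ n)
    (f₀ : EuclideanSpace ℝ (Fin n) → EuclideanSpace ℝ (Fin n))
    (f : Fin (n - 1) → EuclideanSpace ℝ (Fin n) → EuclideanSpace ℝ (Fin n))
    (hf₀ : ContDiff ℝ (⊤ : ℕ∞) f₀) (hf : ∀ i, ContDiff ℝ (⊤ : ℕ∞) (f i))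
    (k : Fin (n - 1)) (x₀ : EuclideanSpace ℝ (Fin n)) (u₀ : Fin (n - 1) → ℝ)
    (g : EuclideanSpace ℝ (Fin n) → EuclideanSpace ℝ (Fin n))
    (hg : g = fun x => f₀ x + ∑ i, u₀ i • f i x)
    (hspan : Submodule.span ℝ
        (Set.range (fun i => f i x₀) ∪ {VectorField.lieBracket ℝ g (f k) x₀}) = ⊤)
    (U : Set (EuclideanSpace ℝ (Fin n))) (hU : IsOpen U) (hx₀U : x₀ ∈ U)
    (ψ₀ : EuclideanSpace ℝ (Fin n) → EuclideanSpace ℝ (Fin (n - 1)))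
    (hψ₀ : ContDiffOn ℝ (⊤ : ℕ∞) ψ₀ U)
    (hsurj : Function.Surjective (fderiv ℝ ψ₀ x₀))
    (hfi : ∀ y ∈ U, fderiv ℝ ψ₀ y (f k y) = 0)
    (uh₀ : EuclideanSpace ℝ {j : Fin (n - 1) // j ≠ k})
    (huh₀ : ∀ j : {j : Fin (n - 1) // j ≠ k}, uh₀ j = u₀ j.1)
    (ψ₁ : EuclideanSpace ℝ (Fin n) → EuclideanSpace ℝ {j : Fin (n - 1) // j ≠ k} →
      EuclideanSpace ℝ (Fin (n - 1)))
    (hψ₁ : ∀ x uh, ψ₁ x uh =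
      fderiv ℝ ψ₀ x (f₀ x + ∑ j : {j : Fin (n - 1) // j ≠ k}, uh j • f j.1 x)) :
    ∃ L : (EuclideanSpace ℝ (Fin n) × EuclideanSpace ℝ {j : Fin (n - 1) // j ≠ k}) ≃L[ℝ]
        (EuclideanSpace ℝ (Fin (n - 1)) × EuclideanSpace ℝ (Fin (n - 1))),
      HasFDerivAt (fun p : EuclideanSpace ℝ (Fin n) ×
          EuclideanSpace ℝ {j : Fin (n - 1) // j ≠ k} => (ψ₀ p.1, ψ₁ p.1 p.2))
        (L : (EuclideanSpace ℝ (Fin n) × EuclideanSpace ℝ {j : Fin (n - 1) // j ≠ k}) →L[ℝ]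
          (EuclideanSpace ℝ (Fin (n - 1)) × EuclideanSpace ℝ (Fin (n - 1))))
        (x₀, uh₀) := by
  classical
  have hxU : U ∈ nhds x₀ := hU.mem_nhds hx₀U
  have hψ₀x : ContDiffAt ℝ (⊤ : ℕ∞) ψ₀ x₀ := hψ₀.contDiffAt hxU
  have hA : HasFDerivAt ψ₀ (fderiv ℝ ψ₀ x₀) x₀ :=
    (hψ₀x.differentiableAt (by simp)).hasFDerivAt
  set A := fderiv ℝ ψ₀ x₀ with hAdef
  have hΘU : ContDiffOn ℝ (⊤ : ℕ∞) (fderiv ℝ ψ₀) U := hψ₀.fderiv_of_isOpen hU (by simp)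
  have hΘx : ContDiffAt ℝ (⊤ : ℕ∞) (fderiv ℝ ψ₀) x₀ := hΘU.contDiffAt hxU
  have hΘd : HasFDerivAt (fderiv ℝ ψ₀) (fderiv ℝ (fderiv ℝ ψ₀) x₀) x₀ :=
    (hΘx.differentiableAt (by simp)).hasFDerivAt
  set Θ' := fderiv ℝ (fderiv ℝ ψ₀) x₀ with hΘ'def
  have hsymm : ∀ v w, Θ' v w = Θ' w v := hψ₀x.isSymmSndFDerivAt (by simp only [minSmoothness_of_isRCLikeNormedField]; exact WithTop.coe_le_coe.2 le_top)
  -- first integral identity, differentiated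
  have hfi' : ∀ v, Θ' v (f k x₀) = - A (fderiv ℝ (f k) x₀ v) := by
    have hfk : HasFDerivAt (f k) (fderiv ℝ (f k) x₀) x₀ :=
      ((hf k).differentiable (by simp) x₀).hasFDerivAt
    have h1 : HasFDerivAt (fun y => fderiv ℝ ψ₀ y (f k y))
        ((A.comp (fderiv ℝ (f k) x₀)) + Θ'.flip (f k x₀)) x₀ := hΘd.clm_apply hfk
    have h2 : HasFDerivAt (fun y => fderiv ℝ ψ₀ y (f k y))
        (0 : EuclideanSpace ℝ (Fin n) →L[ℝ] EuclideanSpace ℝ (Fin (n - 1))) x₀ := by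
      have hev : (fun y => fderiv ℝ ψ₀ y (f k y)) =ᶠ[nhds x₀] fun _ => 0 :=
        Filter.eventuallyEq_of_mem hxU fun y hy => hfi y hy
      exact (hasFDerivAt_const 0 x₀).congr_of_eventuallyEq hev
    have h3 := h1.unique h2
    intro v
    have h4 := ContinuousLinearMap.ext_iff.1 h3 v
    simp only [ContinuousLinearMap.add_apply, ContinuousLinearMap.comp_apply,
      ContinuousLinearMap.flip_apply, ContinuousLinearMap.zero_apply] at h4
    linear_combination (norm := abel) h4
  -- smoothness/derivative of g
  have hDg : fderiv ℝ g x₀ = fderiv ℝ f₀ x₀ + ∑ i, u₀ i • fderiv ℝ (f i) x₀ := by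
    have : HasFDerivAt g (fderiv ℝ f₀ x₀ + ∑ i, u₀ i • fderiv ℝ (f i) x₀) x₀ := by
      rw [hg]
      exact ((hf₀.differentiable (by simp) x₀).hasFDerivAt).add
        (HasFDerivAt.fun_sum fun i _ => (((hf i).differentiable (by simp) x₀).hasFDerivAt).const_smul (u₀ i))
    exact this.fderiv
  -- split sums at k
  have hsplit : ∀ {M : Type} [AddCommGroup M] (F : Fin (n - 1) → M),
      ∑ i, F i = F k + ∑ j : {j : Fin (n - 1) // j ≠ k}, F j.1 := by
    intro M _ F
    rw [← Finset.sum_subtype (Finset.univ.erase k) (fun x => by simp [Finset.mem_erase]) F]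
    exact (Finset.add_sum_erase _ F (Finset.mem_univ k)).symm
  -- linear independence of the n spanning vectors
  set lb := VectorField.lieBracket ℝ g (f k) x₀ with hlbdef
  set b : Option (Fin (n - 1)) → EuclideanSpace ℝ (Fin n) :=
    fun o => o.elim lb (fun i => f i x₀) with hbdef
  have hrange : Set.range b = Set.range (fun i => f i x₀) ∪ {lb} := by
    ext y
    constructor
    · rintro ⟨o, rfl⟩
      cases o with
      | none => exact Or.inr rfl
      | some i => exact Or.inl ⟨i, rfl⟩
    · rintro (⟨i, rfl⟩ | rfl)
      · exact ⟨some i, rfl⟩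
      · exact ⟨none, rfl⟩
  have hcard : Fintype.card (Option (Fin (n - 1))) = finrank ℝ (EuclideanSpace ℝ (Fin n)) := by
    simp [finrank_euclideanSpace]
    omega
  have li : LinearIndependent ℝ b := by
    apply linearIndependent_of_top_le_span_of_card_eq_finrank _ hcard
    rw [hrange, hspan]
  have hfk0 : f k x₀ ≠ 0 := by
    have := li.ne_zero (some k)
    simpa [hbdef] using this
  -- kernel of A is the span of f k x₀
  have hker : Submodule.span ℝ {f k x₀} = LinearMap.ker (A : EuclideanSpace ℝ (Fin n) →ₗ[ℝ] EuclideanSpace ℝ (Fin (n - 1))) := by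
    have hle : Submodule.span ℝ {f k x₀} ≤ LinearMap.ker (A : EuclideanSpace ℝ (Fin n) →ₗ[ℝ] EuclideanSpace ℝ (Fin (n - 1))) := by
      rw [Submodule.span_singleton_le_iff_mem]
      exact LinearMap.mem_ker.2 (hfi x₀ hx₀U)
    apply Submodule.eq_of_le_of_finrank_le hle
    have hrank := LinearMap.finrank_range_add_finrank_ker (A : EuclideanSpace ℝ (Fin n) →ₗ[ℝ] EuclideanSpace ℝ (Fin (n - 1)))
    have hrtop : LinearMap.range (A : EuclideanSpace ℝ (Fin n) →ₗ[ℝ] EuclideanSpace ℝ (Fin (n - 1))) = ⊤ :=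
      LinearMap.range_eq_top.2 hsurj
    rw [hrtop, finrank_top] at hrank
    simp only [finrank_euclideanSpace, Fintype.card_fin] at hrank
    have h1 : finrank ℝ (LinearMap.ker (A : EuclideanSpace ℝ (Fin n) →ₗ[ℝ] EuclideanSpace ℝ (Fin (n - 1)))) = 1 := by omega
    rw [finrank_span_singleton hfk0]
    exact le_of_eq h1
  -- construction of the derivative
  set c : EuclideanSpace ℝ (Fin n) × EuclideanSpace ℝ {j : Fin (n - 1) // j ≠ k} →
      EuclideanSpace ℝ (Fin n) :=
    fun p => f₀ p.1 + ∑ j : {j : Fin (n - 1) // j ≠ k}, p.2 j • f j.1 p.1 with hcdef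
  set c' : (EuclideanSpace ℝ (Fin n) × EuclideanSpace ℝ {j : Fin (n - 1) // j ≠ k}) →L[ℝ]
      EuclideanSpace ℝ (Fin n) :=
    (fderiv ℝ f₀ x₀).comp (ContinuousLinearMap.fst ℝ _ _) +
      ∑ j : {j : Fin (n - 1) // j ≠ k},
        (uh₀ j • ((fderiv ℝ (f j.1) x₀).comp (ContinuousLinearMap.fst ℝ _ _)) +
          ((EuclideanSpace.proj j).comp (ContinuousLinearMap.snd ℝ _ _)).smulRight (f j.1 x₀))
    with hc'def
  have hc : HasFDerivAt c c' (x₀, uh₀) := by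
    apply HasFDerivAt.add
    · exact ((hf₀.differentiable (by simp) x₀).hasFDerivAt).comp _ hasFDerivAt_fst
    · apply HasFDerivAt.fun_sum
      intro j _
      have h1 : HasFDerivAt
          (fun p : EuclideanSpace ℝ (Fin n) × EuclideanSpace ℝ {j : Fin (n - 1) // j ≠ k} => p.2 j)
          ((EuclideanSpace.proj j).comp (ContinuousLinearMap.snd ℝ _ _)) (x₀, uh₀) := by
        have := ((EuclideanSpace.proj j).comp (ContinuousLinearMap.snd ℝ (EuclideanSpace ℝ (Fin n)) (EuclideanSpace ℝ {j : Fin (n - 1) // j ≠ k}))).hasFDerivAt (x := (x₀, uh₀))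
        exact this.congr_of_eventuallyEq (by filter_upwards with p; rfl)
      have h2 : HasFDerivAt
          (fun p : EuclideanSpace ℝ (Fin n) × EuclideanSpace ℝ {j : Fin (n - 1) // j ≠ k} => f j.1 p.1)
          ((fderiv ℝ (f j.1) x₀).comp (ContinuousLinearMap.fst ℝ _ _)) (x₀, uh₀) :=
        (((hf j.1).differentiable (by simp) x₀).hasFDerivAt).comp _ hasFDerivAt_fst
      exact h1.smul h2
  have hΘfst : HasFDerivAt
      (fun p : EuclideanSpace ℝ (Fin n) × EuclideanSpace ℝ {j : Fin (n - 1) // j ≠ k} =>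
        fderiv ℝ ψ₀ p.1)
      (Θ'.comp (ContinuousLinearMap.fst ℝ _ _)) (x₀, uh₀) :=
    hΘd.comp _ hasFDerivAt_fst
  have h2nd := hΘfst.clm_apply hc
  have hfst : HasFDerivAt
      (fun p : EuclideanSpace ℝ (Fin n) × EuclideanSpace ℝ {j : Fin (n - 1) // j ≠ k} => ψ₀ p.1)
      (A.comp (ContinuousLinearMap.fst ℝ _ _)) (x₀, uh₀) :=
    hA.comp _ hasFDerivAt_fst
  set D := (A.comp (ContinuousLinearMap.fst ℝ (EuclideanSpace ℝ (Fin n)) (EuclideanSpace ℝ {j : Fin (n - 1) // j ≠ k}))).prod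
      ((A.comp c') + (Θ'.comp (ContinuousLinearMap.fst ℝ _ _)).flip (c (x₀, uh₀))) with hDdef
  have hΦ : HasFDerivAt
      (fun p : EuclideanSpace ℝ (Fin n) × EuclideanSpace ℝ {j : Fin (n - 1) // j ≠ k} =>
        (ψ₀ p.1, ψ₁ p.1 p.2)) D (x₀, uh₀) := by
    have h := HasFDerivAt.prodMk hfst h2nd
    apply h.congr_of_eventuallyEq
    filter_upwards with p
    rw [hψ₁]
  -- value of c at the base point
  have hgx : g x₀ = f₀ x₀ + ∑ i, u₀ i • f i x₀ := by rw [hg]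
  have hc₀ : c (x₀, uh₀) = g x₀ - u₀ k • f k x₀ := by
    show f₀ x₀ + ∑ j : {j : Fin (n - 1) // j ≠ k}, uh₀ j • f j.1 x₀ = _
    rw [hgx, hsplit (fun i => u₀ i • f i x₀)]
    simp only [huh₀]
    abel
  -- injectivity of D
  have hinj : ∀ p : EuclideanSpace ℝ (Fin n) × EuclideanSpace ℝ {j : Fin (n - 1) // j ≠ k},
      D p = 0 → p = 0 := by
    rintro ⟨v, w⟩ hp
    have h1 : A v = 0 := by
      have := congrArg Prod.fst hp
      simpa [hDdef] using this
    have h2 : A (c' (v, w)) + Θ' v (c (x₀, uh₀)) = 0 := by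
      have := congrArg Prod.snd hp
      simpa [hDdef] using this
    obtain ⟨t, htv⟩ : ∃ t : ℝ, t • f k x₀ = v :=
      Submodule.mem_span_singleton.1 (by rw [hker]; exact LinearMap.mem_ker.2 h1)
    have hc'vw : c' (v, w) = (fderiv ℝ f₀ x₀) v
        + ∑ j : {j : Fin (n - 1) // j ≠ k},
          (uh₀ j • (fderiv ℝ (f j.1) x₀) v + w j • f j.1 x₀) := by
      simp [hc'def, ContinuousLinearMap.sum_apply]
    have hDgv : (fderiv ℝ f₀ x₀) v
        + ∑ j : {j : Fin (n - 1) // j ≠ k}, uh₀ j • (fderiv ℝ (f j.1) x₀) v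
        = fderiv ℝ g x₀ v - u₀ k • fderiv ℝ (f k) x₀ v := by
      rw [hDg]
      simp only [ContinuousLinearMap.add_apply, ContinuousLinearMap.sum_apply,
        ContinuousLinearMap.smul_apply]
      rw [hsplit (fun i => u₀ i • (fderiv ℝ (f i) x₀) v)]
      simp only [huh₀]
      abel
    have hins : c' (v, w) = (fderiv ℝ g x₀ v - u₀ k • fderiv ℝ (f k) x₀ v)
        + ∑ j : {j : Fin (n - 1) // j ≠ k}, w j • f j.1 x₀ := by
      rw [hc'vw, Finset.sum_add_distrib, ← add_assoc, hDgv]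
    have hThc₀ : Θ' v (c (x₀, uh₀)) =
        -(t • A (fderiv ℝ (f k) x₀ (g x₀))) + (u₀ k * t) • A (fderiv ℝ (f k) x₀ (f k x₀)) := by
      rw [hc₀, map_sub, (Θ' v).map_smul]
      have e1 : Θ' v (g x₀) = -(t • A (fderiv ℝ (f k) x₀ (g x₀))) := by
        rw [hsymm v (g x₀), ← htv, (Θ' (g x₀)).map_smul, hfi' (g x₀)]
        simp
      have e2 : Θ' v (f k x₀) = -(t • A (fderiv ℝ (f k) x₀ (f k x₀))) := by
        rw [hfi' v, ← htv, (fderiv ℝ (f k) x₀).map_smul, A.map_smul]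
      rw [e1, e2]
      module
    have hkey : A ((-t) • lb + ∑ j : {j : Fin (n - 1) // j ≠ k}, w j • f j.1 x₀) = 0 := by
      have hlb : lb = fderiv ℝ (f k) x₀ (g x₀) - fderiv ℝ g x₀ (f k x₀) := rfl
      rw [hins] at h2
      rw [map_add, map_sub, A.map_smul] at h2
      rw [hThc₀] at h2
      have e3 : A (fderiv ℝ g x₀ v) = t • A (fderiv ℝ g x₀ (f k x₀)) := by
        rw [← htv, (fderiv ℝ g x₀).map_smul, A.map_smul]
      have e4 : A (fderiv ℝ (f k) x₀ v) = t • A (fderiv ℝ (f k) x₀ (f k x₀)) := by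
        rw [← htv, (fderiv ℝ (f k) x₀).map_smul, A.map_smul]
      rw [e3, e4] at h2
      rw [map_add, A.map_smul, hlb, map_sub]
      linear_combination (norm := module) h2
    obtain ⟨d, hd⟩ : ∃ d : ℝ, d • f k x₀
        = (-t) • lb + ∑ j : {j : Fin (n - 1) // j ≠ k}, w j • f j.1 x₀ :=
      Submodule.mem_span_singleton.1 (by rw [hker]; exact LinearMap.mem_ker.2 hkey)
    set γ : Option (Fin (n - 1)) → ℝ :=
      fun o => o.elim (-t) (fun i => if h : i = k then -d else w ⟨i, h⟩) with hγdef
    have hrel : ∑ o : Option (Fin (n - 1)), γ o • b o = 0 := by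
      rw [Fintype.sum_option]
      have hsum : ∑ i, γ (some i) • b (some i)
          = (-d) • f k x₀ + ∑ j : {j : Fin (n - 1) // j ≠ k}, w j • f j.1 x₀ := by
        rw [hsplit (fun i => γ (some i) • b (some i))]
        congr 1
        · simp [hγdef, hbdef]
        · apply Finset.sum_congr rfl
          intro j _
          have : γ (some j.1) = w j := by
            simp only [hγdef, Option.elim]
            rw [dif_neg j.2]
          rw [this]
          rfl
      rw [hsum]
      show (-t) • lb + _ = 0
      linear_combination (norm := module) hd.symm
    have hzero := Fintype.linearIndependent_iff.1 li γ hrel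
    have ht0 : t = 0 := by
      have := hzero none
      simp only [hγdef, Option.elim] at this
      linarith
    have hw0 : w = 0 := by
      ext j
      have := hzero (some j.1)
      simp only [hγdef, Option.elim] at this
      rw [dif_neg j.2] at this
      exact this
    have hv0 : v = 0 := by rw [← htv, ht0, zero_smul]
    rw [Prod.mk_eq_zero]
    exact ⟨hv0, hw0⟩
  have hinjF : Function.Injective D := (injective_iff_map_eq_zero D).2 hinj
  have hfr : finrank ℝ (EuclideanSpace ℝ (Fin n) × EuclideanSpace ℝ {j : Fin (n - 1) // j ≠ k})
      = finrank ℝ (EuclideanSpace ℝ (Fin (n - 1)) × EuclideanSpace ℝ (Fin (n - 1))) := by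
    rw [Module.finrank_prod, Module.finrank_prod]
    simp only [finrank_euclideanSpace, Fintype.card_fin, Fintype.card_subtype_compl,
      Fintype.card_subtype_eq]
    omega
  have hsurjD : Function.Surjective D :=
    (LinearMap.injective_iff_surjective_of_finrank_eq_finrank
      (f := (D.toLinearMap)) hfr).1 hinjF
  refine ⟨(LinearEquiv.ofBijective D.toLinearMap ⟨hinjF, hsurjD⟩).toContinuousLinearEquiv, ?_⟩
  have hcoe : ((LinearEquiv.ofBijective D.toLinearMap
      ⟨hinjF, hsurjD⟩).toContinuousLinearEquiv :
      EuclideanSpace ℝ (Fin n) × EuclideanSpace ℝ {j : Fin (n - 1) // j ≠ k} →L[ℝ]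
        EuclideanSpace ℝ (Fin (n - 1)) × EuclideanSpace ℝ (Fin (n - 1))) = D :=
    ContinuousLinearMap.ext fun p => rfl
  rw [hcoe]
  exact hΦ
end

section
/- Let n ≥ 2, let f₀, f₁, …, f_{n−1} : ℝⁿ → ℝⁿ be C^∞ vector fields, k ∈ {1,…,n−1}, x₀ ∈ ℝⁿ, u₀ ∈ ℝ^{n−1}, and set g = f₀ + Σ_{i=1}^{n−1} u₀ᵢ fᵢ. Assume the n vectors f₁(x₀), …, f_{n−1}(x₀), [g, f_k](x₀) span ℝⁿ. Let U be an open neighborhood of x₀ and ψ₀ : U → ℝ^{n−1} a C^∞ map such that Dψ₀(x₀) is surjective and Dψ₀(y)(f_k(y)) = 0 for all y ∈ U. For u ∈ ℝ^{n−1} write û ∈ ℝ^{n−2} for u with its k-th entry deleted; define ψ₁ : U × ℝ^{n−2} → ℝ^{n−1} by ψ₁(x, û) = Dψ₀(x)( f₀(x) + Σ_{j≠k} û_j f_j(x) ), and define ψ₂ : U × ℝ^{n−1} × ℝ^{n−2} → ℝ^{n−1} by ψ₂(x, u, v) = D_x ψ₁(x, û)( f₀(x) + Σ_{i=1}^{n−1}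 u_i f_i(x) ) + Σ_{j≠k} v_j · Dψ₀(x)(f_j(x)), where D_x ψ₁ denotes the partial Fréchet derivative of ψ₁ with respect to x. Then for every v₀ ∈ ℝ^{n−2}, the Fréchet derivative at (x₀, u₀, v₀) of the map (x, u, v) ↦ (ψ₀(x), ψ₁(x, û), ψ₂(x, u, v)) is a linear isomorphism from ℝⁿ × ℝ^{n−1} × ℝ^{n−2} onto ℝ^{n−1} × ℝ^{n−1} × ℝ^{n−1}. -/
open Finset in
lemma sum_split_ne {M : Type*} [AddCommMonoid M] {ι : Type*} [Fintype ι] [DecidableEq ι]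
    (k : ι) (t : ι → M) :
    ∑ i, t i = t k + ∑ j : {j : ι // j ≠ k}, t j.1 := by
  rw [← Finset.sum_subtype (Finset.univ.erase k) (by simp) t]
  exact (Finset.add_sum_erase _ t (Finset.mem_univ k)).symm

noncomputable def euclSum {ι : Type*} [Fintype ι] {W : Type*} [NormedAddCommGroup W]
    [NormedSpace ℝ W] (c : ι → W) : EuclideanSpace ℝ ι →L[ℝ] W :=
  LinearMap.toContinuousLinearMap
    { toFun := fun u => ∑ i, u i • c i
      map_add' := by intro u v; simp [PiLp.add_apply, add_smul, Finset.sum_add_distrib]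
      map_smul' := by intro m u; simp [PiLp.smul_apply, smul_smul, Finset.smul_sum] }

@[simp] lemma euclSum_apply {ι : Type*} [Fintype ι] {W : Type*} [NormedAddCommGroup W]
    [NormedSpace ℝ W] (c : ι → W) (u : EuclideanSpace ℝ ι) :
    euclSum c u = ∑ i, u i • c i := rfl

lemma euclSum_single {ι : Type*} [Fintype ι] [DecidableEq ι] {W : Type*} [NormedAddCommGroup W]
    [NormedSpace ℝ W] (c : ι → W) (i : ι) (r : ℝ) :
    euclSum c (EuclideanSpace.single i r) = r • c i := by
  simp [euclSum_apply, EuclideanSpace.single_apply, ite_smul, Finset.sum_ite_eq']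

noncomputable def euclRestr {m : ℕ} (k : Fin m) :
    EuclideanSpace ℝ (Fin m) →L[ℝ] EuclideanSpace ℝ {j : Fin m // j ≠ k} :=
  LinearMap.toContinuousLinearMap
    { toFun := fun u => (WithLp.toLp 2 (fun j : {j : Fin m // j ≠ k} => u j.1) : EuclideanSpace ℝ {j : Fin m // j ≠ k})
      map_add' := by intro u v; rfl
      map_smul' := by intro m u; rfl }

@[simp] lemma euclRestr_apply {m : ℕ} (k : Fin m) (u : EuclideanSpace ℝ (Fin m))
    (j : {j : Fin m // j ≠ k}) : euclRestr k u j = u j.1 := rfl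

lemma euclRestr_single {m : ℕ} (k : Fin m) (c : ℝ) :
    euclRestr k (EuclideanSpace.single k c) = 0 := by
  ext j
  simp [EuclideanSpace.single_apply, j.2]

set_option maxHeartbeats 2000000 in
/-- Under the generic condition
`span{f₁(x₀), …, f_{n-1}(x₀), [g, f_k](x₀)} = ℝⁿ`, if `ψ₀` is a vector of `n-1` first
integrals of `f k` on `U` with `Dψ₀(x₀)` surjective, then the map
`(x, u, v) ↦ (ψ₀(x), ψ₁(x, û), ψ₂(x, u, v))` has an invertible Fréchet derivative at
`(x₀, u₀, v₀)` for every `v₀` (invertibility of the matrix `N` of the paper). -/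
theorem flat_output_second_stage_isomorphism
    (n : ℕ) (hn : 2 ≤ n)
    (f₀ : EuclideanSpace ℝ (Fin n) → EuclideanSpace ℝ (Fin n))
    (f : Fin (n - 1) → EuclideanSpace ℝ (Fin n) → EuclideanSpace ℝ (Fin n))
    (hf₀ : ContDiff ℝ (⊤ : ℕ∞) f₀) (hf : ∀ i, ContDiff ℝ (⊤ : ℕ∞) (f i))
    (k : Fin (n - 1)) (x₀ : EuclideanSpace ℝ (Fin n))
    (u₀ : EuclideanSpace ℝ (Fin (n - 1)))
    (g : EuclideanSpace ℝ (Fin n) → EuclideanSpace ℝ (Fin n))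
    (hg : g = fun x => f₀ x + ∑ i, u₀ i • f i x)
    (hspan : Submodule.span ℝ
        (Set.range (fun i => f i x₀) ∪ {VectorField.lieBracket ℝ g (f k) x₀}) = ⊤)
    (U : Set (EuclideanSpace ℝ (Fin n))) (hU : IsOpen U) (hx₀U : x₀ ∈ U)
    (ψ₀ : EuclideanSpace ℝ (Fin n) → EuclideanSpace ℝ (Fin (n - 1)))
    (hψ₀ : ContDiffOn ℝ (⊤ : ℕ∞) ψ₀ U)
    (hsurj : Function.Surjective (fderiv ℝ ψ₀ x₀))
    (hfi : ∀ y ∈ U, fderiv ℝ ψ₀ y (f k y) = 0)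
    (ψ₁ : EuclideanSpace ℝ (Fin n) → EuclideanSpace ℝ {j : Fin (n - 1) // j ≠ k} →
      EuclideanSpace ℝ (Fin (n - 1)))
    (hψ₁ : ∀ x uh, ψ₁ x uh =
      fderiv ℝ ψ₀ x (f₀ x + ∑ j : {j : Fin (n - 1) // j ≠ k}, uh j • f j.1 x))
    (ψ₂ : EuclideanSpace ℝ (Fin n) → EuclideanSpace ℝ (Fin (n - 1)) →
      EuclideanSpace ℝ {j : Fin (n - 1) // j ≠ k} → EuclideanSpace ℝ (Fin (n - 1)))
    (hψ₂ : ∀ x u v, ψ₂ x u v =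
      fderiv ℝ (fun x' => ψ₁ x' (WithLp.toLp 2 (fun j : {j : Fin (n - 1) // j ≠ k} => u j.1))) x (f₀ x + ∑ i, u i • f i x) +
        ∑ j : {j : Fin (n - 1) // j ≠ k}, v j • fderiv ℝ ψ₀ x (f j.1 x)) :
    ∀ v₀ : EuclideanSpace ℝ {j : Fin (n - 1) // j ≠ k},
      ∃ L : (EuclideanSpace ℝ (Fin n) × EuclideanSpace ℝ (Fin (n - 1)) ×
          EuclideanSpace ℝ {j : Fin (n - 1) // j ≠ k}) ≃L[ℝ]
          (EuclideanSpace ℝ (Fin (n - 1)) × EuclideanSpace ℝ (Fin (n - 1)) ×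
            EuclideanSpace ℝ (Fin (n - 1))),
        HasFDerivAt
          (fun p : EuclideanSpace ℝ (Fin n) × EuclideanSpace ℝ (Fin (n - 1)) ×
              EuclideanSpace ℝ {j : Fin (n - 1) // j ≠ k} =>
            (ψ₀ p.1, ψ₁ p.1 (WithLp.toLp 2 (fun j : {j : Fin (n - 1) // j ≠ k} => p.2.1 j.1)), ψ₂ p.1 p.2.1 p.2.2))
          (L : (EuclideanSpace ℝ (Fin n) × EuclideanSpace ℝ (Fin (n - 1)) ×
              EuclideanSpace ℝ {j : Fin (n - 1) // j ≠ k}) →L[ℝ]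
            (EuclideanSpace ℝ (Fin (n - 1)) × EuclideanSpace ℝ (Fin (n - 1)) ×
              EuclideanSpace ℝ (Fin (n - 1))))
          (x₀, u₀, v₀) := by
  classical
  intro v₀
  -- ## Step A : smoothness basics
  have hψy : ∀ y ∈ U, ContDiffAt ℝ 3 ψ₀ y := fun y hy =>
    (hψ₀.contDiffAt (hU.mem_nhds hy)).of_le (by exact WithTop.coe_le_coe.mpr (le_top : (3:ℕ∞) ≤ ⊤))
  have hA : ∀ y ∈ U, ContDiffAt ℝ 2 (fderiv ℝ ψ₀) y := fun y hy =>
    (hψy y hy).fderiv_right (by norm_num)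
  have hQc : ContDiffAt ℝ 1 (fderiv ℝ (fderiv ℝ ψ₀)) x₀ :=
    (hA x₀ hx₀U).fderiv_right (by norm_num)
  have hdψ : ∀ y ∈ U, HasFDerivAt ψ₀ (fderiv ℝ ψ₀ y) y := fun y hy =>
    ((hψy y hy).differentiableAt (by norm_num)).hasFDerivAt
  have hdA : ∀ y ∈ U, HasFDerivAt (fderiv ℝ ψ₀) (fderiv ℝ (fderiv ℝ ψ₀) y) y := fun y hy =>
    (((hA y hy).of_le (m := 1) (by norm_num)).differentiableAt one_ne_zero).hasFDerivAt
  have hfd₀ : Differentiable ℝ f₀ := hf₀.differentiable (by simp)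
  have hfdi : ∀ i, Differentiable ℝ (f i) := fun i => (hf i).differentiable (by simp)
  set A := fderiv ℝ ψ₀ x₀ with hAdef
  set Q := fderiv ℝ (fderiv ℝ ψ₀) x₀ with hQdef
  have hsymm : ∀ v w, Q v w = Q w v := by
    intro v w
    exact second_derivative_symmetric_of_eventually
      (by filter_upwards [hU.mem_nhds hx₀U] with y hy using hdψ y hy) (hdA x₀ hx₀U) v w
  have hdag : ∀ δ, Q δ (f k x₀) + A ((fderiv ℝ (f k) x₀) δ) = 0 := by
    intro δ
    have h1 : HasFDerivAt (fun y => fderiv ℝ ψ₀ y (f k y))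
        ((A).comp (fderiv ℝ (f k) x₀) + Q.flip (f k x₀)) x₀ :=
      (hdA x₀ hx₀U).clm_apply (hfdi k x₀).hasFDerivAt
    have h2 : HasFDerivAt (fun _ : EuclideanSpace ℝ (Fin n) =>
        (0 : EuclideanSpace ℝ (Fin (n-1))))
        (0 : EuclideanSpace ℝ (Fin n) →L[ℝ] EuclideanSpace ℝ (Fin (n-1))) x₀ :=
      hasFDerivAt_const _ _
    have h3 : (fun y => fderiv ℝ ψ₀ y (f k y)) =ᶠ[nhds x₀]
        (fun _ => (0 : EuclideanSpace ℝ (Fin (n-1)))) := by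
      filter_upwards [hU.mem_nhds hx₀U] with y hy using hfi y hy
    have h4 := (h2.congr_of_eventuallyEq h3).unique h1
    have := DFunLike.congr_fun h4.symm δ
    simpa [add_comm] using this
  -- ## Step B : key vectors and the key identity
  set Fk := f k x₀ with hFk
  set G₀ := f₀ x₀ + ∑ i, u₀ i • f i x₀ with hG₀
  set h₀ := f₀ x₀ + ∑ j : {j : Fin (n-1) // j ≠ k}, u₀ j.1 • f j.1 x₀ with hh₀
  set DG := fderiv ℝ f₀ x₀ + ∑ i, u₀ i • fderiv ℝ (f i) x₀ with hDG
  set Dh₀ := fderiv ℝ f₀ x₀ + ∑ j : {j : Fin (n-1) // j ≠ k}, u₀ j.1 • fderiv ℝ (f j.1) x₀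
    with hDh₀
  set w' := VectorField.lieBracket ℝ g (f k) x₀ with hw'
  have hgd : HasFDerivAt g DG x₀ := by
    rw [hg, hDG]
    exact ((hfd₀ x₀).hasFDerivAt).add
      (HasFDerivAt.fun_sum fun i _ => ((hfdi i x₀).hasFDerivAt).const_smul (u₀ i))
  have hgx₀ : g x₀ = G₀ := by rw [hg]
  have hAw' : A w' = A ((fderiv ℝ (f k) x₀) G₀) - A (DG Fk) := by
    rw [hw', VectorField.lieBracket, hgd.fderiv, hgx₀, map_sub]
  have hkey : Q Fk h₀ + A (Dh₀ Fk) = -(A w') := by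
    have e1 := hdag Fk
    have e2 := hdag G₀
    have e3 : Q Fk G₀ = Q G₀ Fk := hsymm Fk G₀
    rw [hAw']
    have hh : h₀ = G₀ - u₀ k • Fk := by
      rw [hG₀, hh₀, sum_split_ne k (fun i => u₀ i • f i x₀)]; abel
    have hD : Dh₀ = DG - u₀ k • fderiv ℝ (f k) x₀ := by
      rw [hDG, hDh₀, sum_split_ne k (fun i => u₀ i • fderiv ℝ (f i) x₀)]; abel
    rw [hh, hD]
    simp only [map_sub, map_smul, ContinuousLinearMap.sub_apply, ContinuousLinearMap.smul_apply]
    linear_combination (norm := module) e3 + e2 - (u₀ k) • e1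
  -- ## Step C : convenient continuous linear maps
  set Lg := euclSum (fun i => f i x₀) with hLg
  set LhE := euclSum (fun j : {j : Fin (n-1) // j ≠ k} => f j.1 x₀) with hLhE
  set LDHE := euclSum (fun j : {j : Fin (n-1) // j ≠ k} => fderiv ℝ (f j.1) x₀) with hLDHE
  set Rk := euclRestr k with hRk
  -- ## Step D : the smooth representative `Gmap` and its derivative `N`
  set Gmap : EuclideanSpace ℝ (Fin n) × EuclideanSpace ℝ (Fin (n - 1)) ×
      EuclideanSpace ℝ {j : Fin (n - 1) // j ≠ k} →
      EuclideanSpace ℝ (Fin (n-1)) × EuclideanSpace ℝ (Fin (n-1)) × EuclideanSpace ℝ (Fin (n-1)) :=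
    fun p =>
      (ψ₀ p.1,
       fderiv ℝ ψ₀ p.1 (f₀ p.1 + ∑ j : {j : Fin (n-1) // j ≠ k}, p.2.1 j.1 • f j.1 p.1),
       fderiv ℝ ψ₀ p.1 ((fderiv ℝ f₀ p.1 + ∑ j : {j : Fin (n-1) // j ≠ k},
           p.2.1 j.1 • fderiv ℝ (f j.1) p.1) (f₀ p.1 + ∑ i, p.2.1 i • f i p.1)) +
         fderiv ℝ (fderiv ℝ ψ₀) p.1 (f₀ p.1 + ∑ i, p.2.1 i • f i p.1)
           (f₀ p.1 + ∑ j : {j : Fin (n-1) // j ≠ k}, p.2.1 j.1 • f j.1 p.1) +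
         ∑ j : {j : Fin (n-1) // j ≠ k}, p.2.2 j • fderiv ℝ ψ₀ p.1 (f j.1 p.1))
    with hGmap
  have hGdiff : DifferentiableAt ℝ Gmap (x₀, u₀, v₀) := by
    have dfst : DifferentiableAt ℝ
        (fun p : EuclideanSpace ℝ (Fin n) × EuclideanSpace ℝ (Fin (n - 1)) ×
          EuclideanSpace ℝ {j : Fin (n - 1) // j ≠ k} => p.1) (x₀, u₀, v₀) := differentiableAt_fst
    have dψ : DifferentiableAt ℝ (fun p : EuclideanSpace ℝ (Fin n) ×
        EuclideanSpace ℝ (Fin (n - 1)) × EuclideanSpace ℝ {j : Fin (n - 1) // j ≠ k} => ψ₀ p.1)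
        (x₀, u₀, v₀) :=
      ((hψy x₀ hx₀U).differentiableAt (by norm_num)).comp _ dfst
    have dA' : DifferentiableAt ℝ (fun p : EuclideanSpace ℝ (Fin n) ×
        EuclideanSpace ℝ (Fin (n - 1)) × EuclideanSpace ℝ {j : Fin (n - 1) // j ≠ k} =>
        fderiv ℝ ψ₀ p.1) (x₀, u₀, v₀) :=
      (((hA x₀ hx₀U).of_le one_le_two).differentiableAt one_ne_zero).comp _ dfst
    have dQ' : DifferentiableAt ℝ (fun p : EuclideanSpace ℝ (Fin n) ×
        EuclideanSpace ℝ (Fin (n - 1)) × EuclideanSpace ℝ {j : Fin (n - 1) // j ≠ k} =>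
        fderiv ℝ (fderiv ℝ ψ₀) p.1) (x₀, u₀, v₀) :=
      (hQc.differentiableAt one_ne_zero).comp (g := fderiv ℝ (fderiv ℝ ψ₀)) _ dfst
    have df₀' : DifferentiableAt ℝ (fun p : EuclideanSpace ℝ (Fin n) ×
        EuclideanSpace ℝ (Fin (n - 1)) × EuclideanSpace ℝ {j : Fin (n - 1) // j ≠ k} =>
        f₀ p.1) (x₀, u₀, v₀) := (hfd₀ x₀).comp _ dfst
    have dfi' : ∀ i, DifferentiableAt ℝ (fun p : EuclideanSpace ℝ (Fin n) ×
        EuclideanSpace ℝ (Fin (n - 1)) × EuclideanSpace ℝ {j : Fin (n - 1) // j ≠ k} =>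
        f i p.1) (x₀, u₀, v₀) := fun i => (hfdi i x₀).comp _ dfst
    have dDf₀' : DifferentiableAt ℝ (fun p : EuclideanSpace ℝ (Fin n) ×
        EuclideanSpace ℝ (Fin (n - 1)) × EuclideanSpace ℝ {j : Fin (n - 1) // j ≠ k} =>
        fderiv ℝ f₀ p.1) (x₀, u₀, v₀) :=
      (((hf₀.fderiv_right (m := 1) (by exact WithTop.coe_le_coe.mpr le_top)).differentiable one_ne_zero) x₀).comp _ dfst
    have dDfi' : ∀ i, DifferentiableAt ℝ (fun p : EuclideanSpace ℝ (Fin n) ×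
        EuclideanSpace ℝ (Fin (n - 1)) × EuclideanSpace ℝ {j : Fin (n - 1) // j ≠ k} =>
        fderiv ℝ (f i) p.1) (x₀, u₀, v₀) := fun i =>
      ((((hf i).fderiv_right (m := 1) (by exact WithTop.coe_le_coe.mpr le_top)).differentiable one_ne_zero) x₀).comp _ dfst
    have dcu : ∀ i : Fin (n-1), DifferentiableAt ℝ (fun p : EuclideanSpace ℝ (Fin n) ×
        EuclideanSpace ℝ (Fin (n - 1)) × EuclideanSpace ℝ {j : Fin (n - 1) // j ≠ k} =>
        p.2.1 i) (x₀, u₀, v₀) := fun i =>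
      ((EuclideanSpace.proj i : EuclideanSpace ℝ (Fin (n-1)) →L[ℝ] ℝ)).differentiableAt.comp _
        (differentiableAt_fst.comp _ differentiableAt_snd)
    have dcv : ∀ j : {j : Fin (n-1) // j ≠ k}, DifferentiableAt ℝ
        (fun p : EuclideanSpace ℝ (Fin n) × EuclideanSpace ℝ (Fin (n - 1)) ×
          EuclideanSpace ℝ {j : Fin (n - 1) // j ≠ k} => p.2.2 j) (x₀, u₀, v₀) := fun j =>
      ((EuclideanSpace.proj j : EuclideanSpace ℝ {j : Fin (n-1) // j ≠ k} →L[ℝ] ℝ)).differentiableAt.comp _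
        (differentiableAt_snd.comp _ differentiableAt_snd)
    have dH : DifferentiableAt ℝ (fun p : EuclideanSpace ℝ (Fin n) ×
        EuclideanSpace ℝ (Fin (n - 1)) × EuclideanSpace ℝ {j : Fin (n - 1) // j ≠ k} =>
        f₀ p.1 + ∑ j : {j : Fin (n-1) // j ≠ k}, p.2.1 j.1 • f j.1 p.1) (x₀, u₀, v₀) :=
      df₀'.add (DifferentiableAt.fun_sum fun j _ => (dcu j.1).smul (dfi' j.1))
    have dG : DifferentiableAt ℝ (fun p : EuclideanSpace ℝ (Fin n) ×
        EuclideanSpace ℝ (Fin (n - 1)) × EuclideanSpace ℝ {j : Fin (n - 1) // j ≠ k} =>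
        f₀ p.1 + ∑ i, p.2.1 i • f i p.1) (x₀, u₀, v₀) :=
      df₀'.add (DifferentiableAt.fun_sum fun i _ => (dcu i).smul (dfi' i))
    have dDH : DifferentiableAt ℝ (fun p : EuclideanSpace ℝ (Fin n) ×
        EuclideanSpace ℝ (Fin (n - 1)) × EuclideanSpace ℝ {j : Fin (n - 1) // j ≠ k} =>
        fderiv ℝ f₀ p.1 + ∑ j : {j : Fin (n-1) // j ≠ k}, p.2.1 j.1 • fderiv ℝ (f j.1) p.1)
        (x₀, u₀, v₀) :=
      dDf₀'.add (DifferentiableAt.fun_sum fun j _ => (dcu j.1).smul (dDfi' j.1))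
    rw [hGmap]
    exact dψ.prodMk (((dA'.clm_apply dH)).prodMk
      (((dA'.clm_apply (dDH.clm_apply dG)).add ((dQ'.clm_apply dG).clm_apply dH)).add
        (DifferentiableAt.fun_sum fun j _ => (dcv j).smul (dA'.clm_apply (dfi' j.1)))))
  set N := fderiv ℝ Gmap (x₀, u₀, v₀) with hNdef
  have hN : HasFDerivAt Gmap N (x₀, u₀, v₀) := hGdiff.hasFDerivAt
  -- ## Step E : the original map agrees with `Gmap` near the base point
  have hHd : ∀ (y : EuclideanSpace ℝ (Fin n)) (c : EuclideanSpace ℝ (Fin (n-1))),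
      HasFDerivAt (fun x' => f₀ x' + ∑ j : {j : Fin (n-1) // j ≠ k}, c j.1 • f j.1 x')
        (fderiv ℝ f₀ y + ∑ j : {j : Fin (n-1) // j ≠ k}, c j.1 • fderiv ℝ (f j.1) y) y :=
    fun y c => ((hfd₀ y).hasFDerivAt).add
      (HasFDerivAt.fun_sum fun j _ => ((hfdi j.1 y).hasFDerivAt).const_smul (c j.1))
  have hΦeq : (fun p : EuclideanSpace ℝ (Fin n) × EuclideanSpace ℝ (Fin (n - 1)) ×
        EuclideanSpace ℝ {j : Fin (n - 1) // j ≠ k} =>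
        (ψ₀ p.1, ψ₁ p.1 (WithLp.toLp 2 (fun j : {j : Fin (n - 1) // j ≠ k} => p.2.1 j.1)), ψ₂ p.1 p.2.1 p.2.2))
      =ᶠ[nhds (x₀, u₀, v₀)] Gmap := by
    have hmem : (Prod.fst ⁻¹' U : Set (EuclideanSpace ℝ (Fin n) ×
        EuclideanSpace ℝ (Fin (n - 1)) × EuclideanSpace ℝ {j : Fin (n - 1) // j ≠ k}))
        ∈ nhds (x₀, u₀, v₀) :=
      (hU.preimage continuous_fst).mem_nhds hx₀U
    filter_upwards [hmem] with p hp
    simp only [hGmap, Prod.mk.injEq]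
    refine ⟨trivial, hψ₁ p.1 _, ?_⟩
    rw [hψ₂]
    have hfun : (fun x' => ψ₁ x' (WithLp.toLp 2 (fun j : {j : Fin (n - 1) // j ≠ k} => p.2.1 j.1))) = fun x' =>
        fderiv ℝ ψ₀ x' (f₀ x' + ∑ j : {j : Fin (n-1) // j ≠ k}, p.2.1 j.1 • f j.1 x') :=
      funext fun x' => hψ₁ x' _
    rw [hfun, ((hdA p.1 hp).clm_apply (hHd p.1 p.2.1)).fderiv]
    simp only [ContinuousLinearMap.add_apply, ContinuousLinearMap.coe_comp',
      Function.comp_apply, ContinuousLinearMap.flip_apply]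
  have hΦ : HasFDerivAt (fun p : EuclideanSpace ℝ (Fin n) × EuclideanSpace ℝ (Fin (n - 1)) ×
        EuclideanSpace ℝ {j : Fin (n - 1) // j ≠ k} =>
        (ψ₀ p.1, ψ₁ p.1 (WithLp.toLp 2 (fun j : {j : Fin (n - 1) // j ≠ k} => p.2.1 j.1)), ψ₂ p.1 p.2.1 p.2.2)) N (x₀, u₀, v₀) :=
    hN.congr_of_eventuallyEq hΦeq
  -- ## Step F1 : x-slice of N
  have hιx : HasFDerivAt (fun x : EuclideanSpace ℝ (Fin n) =>
      ((x, u₀, v₀) : EuclideanSpace ℝ (Fin n) × EuclideanSpace ℝ (Fin (n - 1)) ×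
        EuclideanSpace ℝ {j : Fin (n - 1) // j ≠ k}))
      ((ContinuousLinearMap.id ℝ (EuclideanSpace ℝ (Fin n))).prod 0) x₀ :=
    (hasFDerivAt_id x₀).prodMk (hasFDerivAt_const (u₀, v₀) x₀)
  have hsliceNx : HasFDerivAt (fun x : EuclideanSpace ℝ (Fin n) => Gmap (x, u₀, v₀))
      (N.comp ((ContinuousLinearMap.id ℝ (EuclideanSpace ℝ (Fin n))).prod 0)) x₀ :=
    hN.comp x₀ hιx
  have hc2x : HasFDerivAt (fun x => fderiv ℝ ψ₀ x
      (f₀ x + ∑ j : {j : Fin (n-1) // j ≠ k}, u₀ j.1 • f j.1 x))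
      (A.comp Dh₀ + Q.flip h₀) x₀ := (hdA x₀ hx₀U).clm_apply (hHd x₀ u₀)
  have hc3x : DifferentiableAt ℝ (fun x : EuclideanSpace ℝ (Fin n) =>
      (Gmap (x, u₀, v₀)).2.2) x₀ :=
    ((hGdiff.comp x₀ hιx.differentiableAt).snd).snd
  set Cx := fderiv ℝ (fun x : EuclideanSpace ℝ (Fin n) => (Gmap (x, u₀, v₀)).2.2) x₀ with hCx
  have hdirectx : HasFDerivAt (fun x : EuclideanSpace ℝ (Fin n) => Gmap (x, u₀, v₀))
      (A.prod ((A.comp Dh₀ + Q.flip h₀).prod Cx)) x₀ :=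
    (hdψ x₀ hx₀U).prodMk (hc2x.prodMk hc3x.hasFDerivAt)
  have hNx := hsliceNx.unique hdirectx
  have hNxeval : ∀ δx, N (δx, 0, 0) =
      (A δx, A (Dh₀ δx) + Q δx h₀, Cx δx) := by
    intro δx
    have h := DFunLike.congr_fun hNx δx
    convert h using 1
    · rfl
    · simp
  -- ## Step F2 : u-slice of N
  have hιu : HasFDerivAt (fun u : EuclideanSpace ℝ (Fin (n-1)) =>
      ((x₀, u, v₀) : EuclideanSpace ℝ (Fin n) × EuclideanSpace ℝ (Fin (n - 1)) ×
        EuclideanSpace ℝ {j : Fin (n - 1) // j ≠ k}))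
      ((0 : EuclideanSpace ℝ (Fin (n-1)) →L[ℝ] EuclideanSpace ℝ (Fin n)).prod
        ((ContinuousLinearMap.id ℝ (EuclideanSpace ℝ (Fin (n-1)))).prod 0)) u₀ :=
    (hasFDerivAt_const x₀ u₀).prodMk ((hasFDerivAt_id u₀).prodMk (hasFDerivAt_const v₀ u₀))
  have hsliceNu : HasFDerivAt (fun u : EuclideanSpace ℝ (Fin (n-1)) => Gmap (x₀, u, v₀))
      (N.comp ((0 : EuclideanSpace ℝ (Fin (n-1)) →L[ℝ] EuclideanSpace ℝ (Fin n)).prod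
        ((ContinuousLinearMap.id ℝ (EuclideanSpace ℝ (Fin (n-1)))).prod 0))) u₀ :=
    hN.comp u₀ hιu
  have hc2u : HasFDerivAt (fun u : EuclideanSpace ℝ (Fin (n-1)) => fderiv ℝ ψ₀ x₀
      (f₀ x₀ + ∑ j : {j : Fin (n-1) // j ≠ k}, u j.1 • f j.1 x₀))
      (A.comp (LhE.comp Rk)) u₀ := by
    have hbig : HasFDerivAt (fun u : EuclideanSpace ℝ (Fin (n-1)) =>
        A (f₀ x₀) + (A.comp (LhE.comp Rk)) u) (A.comp (LhE.comp Rk)) u₀ :=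
      ((A.comp (LhE.comp Rk)).hasFDerivAt).const_add _
    refine hbig.congr_of_eventuallyEq (Filter.Eventually.of_forall fun u => ?_)
    simp [hLhE, hRk, map_add, hAdef]
  obtain ⟨Du, hc3u, hDuk⟩ : ∃ D : EuclideanSpace ℝ (Fin (n-1)) →L[ℝ]
      EuclideanSpace ℝ (Fin (n-1)),
      HasFDerivAt (fun u : EuclideanSpace ℝ (Fin (n-1)) =>
        fderiv ℝ ψ₀ x₀ ((fderiv ℝ f₀ x₀ + ∑ j : {j : Fin (n-1) // j ≠ k},
            u j.1 • fderiv ℝ (f j.1) x₀) (f₀ x₀ + ∑ i, u i • f i x₀)) +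
          fderiv ℝ (fderiv ℝ ψ₀) x₀ (f₀ x₀ + ∑ i, u i • f i x₀)
            (f₀ x₀ + ∑ j : {j : Fin (n-1) // j ≠ k}, u j.1 • f j.1 x₀) +
          ∑ j : {j : Fin (n-1) // j ≠ k}, v₀ j • fderiv ℝ ψ₀ x₀ (f j.1 x₀)) D u₀ ∧
      ∀ c : ℝ, D (EuclideanSpace.single k c) = c • (Q Fk h₀ + A (Dh₀ Fk)) := by
    have t1 : HasFDerivAt (fun u : EuclideanSpace ℝ (Fin (n-1)) =>
        fderiv ℝ f₀ x₀ + (LDHE.comp Rk) u) (LDHE.comp Rk) u₀ :=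
      ((LDHE.comp Rk).hasFDerivAt).const_add _
    have t2 : HasFDerivAt (fun u : EuclideanSpace ℝ (Fin (n-1)) =>
        f₀ x₀ + Lg u) Lg u₀ := (Lg.hasFDerivAt).const_add _
    have t3 : HasFDerivAt (fun u : EuclideanSpace ℝ (Fin (n-1)) =>
        f₀ x₀ + (LhE.comp Rk) u) (LhE.comp Rk) u₀ :=
      ((LhE.comp Rk).hasFDerivAt).const_add _
    have t4 := t1.clm_apply t2
    have t5 := A.hasFDerivAt.comp u₀ t4
    have t6 := Q.hasFDerivAt.comp u₀ t2
    have t7 := t6.clm_apply t3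
    have t8 := (t5.add t7).add_const (∑ j : {j : Fin (n-1) // j ≠ k}, v₀ j •
      fderiv ℝ ψ₀ x₀ (f j.1 x₀))
    refine ⟨_, t8.congr_of_eventuallyEq (Filter.Eventually.of_forall fun u => ?_), fun c => ?_⟩
    · simp only [Function.comp_apply, hLg, hLhE, hLDHE, hRk, euclSum_apply, euclRestr_apply,
        ContinuousLinearMap.coe_comp', ContinuousLinearMap.add_apply, hAdef, hQdef, Pi.add_apply]
    · simp only [ContinuousLinearMap.add_apply, ContinuousLinearMap.coe_comp',
        Function.comp_apply, ContinuousLinearMap.flip_apply, hRk, euclRestr_single, map_zero,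
        ContinuousLinearMap.zero_apply, hLg, euclSum_single, map_smul, add_zero, zero_add,
        ContinuousLinearMap.smul_apply, smul_add, hh₀, hDh₀, hFk, hLhE, hLDHE, euclSum_apply,
        euclRestr_apply, ContinuousLinearMap.coe_smul', Pi.smul_apply,
        EuclideanSpace.single_apply, ite_smul, zero_smul, Finset.sum_ite_eq', Finset.mem_univ,
        if_true, map_smul, map_add]
      module
  have hdirectu : HasFDerivAt (fun u : EuclideanSpace ℝ (Fin (n-1)) => Gmap (x₀, u, v₀))
      ((0 : EuclideanSpace ℝ (Fin (n-1)) →L[ℝ] EuclideanSpace ℝ (Fin (n-1))).prod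
        ((A.comp (LhE.comp Rk)).prod Du)) u₀ :=
    (hasFDerivAt_const (ψ₀ x₀) u₀).prodMk (hc2u.prodMk hc3u)
  have hNu := hsliceNu.unique hdirectu
  have hNueval : ∀ δu, N (0, δu, 0) = (0, A (LhE (Rk δu)), Du δu) := by
    intro δu
    have h := DFunLike.congr_fun hNu δu
    simpa using h
  -- ## Step F3 : v-slice of N
  have hιv : HasFDerivAt (fun v : EuclideanSpace ℝ {j : Fin (n-1) // j ≠ k} =>
      ((x₀, u₀, v) : EuclideanSpace ℝ (Fin n) × EuclideanSpace ℝ (Fin (n - 1)) ×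
        EuclideanSpace ℝ {j : Fin (n - 1) // j ≠ k}))
      ((0 : EuclideanSpace ℝ {j : Fin (n-1) // j ≠ k} →L[ℝ] EuclideanSpace ℝ (Fin n)).prod
        ((0 : EuclideanSpace ℝ {j : Fin (n-1) // j ≠ k} →L[ℝ]
            EuclideanSpace ℝ (Fin (n-1))).prod
          (ContinuousLinearMap.id ℝ (EuclideanSpace ℝ {j : Fin (n-1) // j ≠ k})))) v₀ :=
    (hasFDerivAt_const x₀ v₀).prodMk ((hasFDerivAt_const u₀ v₀).prodMk (hasFDerivAt_id v₀))
  have hsliceNv := hN.comp v₀ hιv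
  set Mv := euclSum (fun j : {j : Fin (n-1) // j ≠ k} => A (f j.1 x₀)) with hMv
  have hc3v : HasFDerivAt (fun v : EuclideanSpace ℝ {j : Fin (n-1) // j ≠ k} =>
      fderiv ℝ ψ₀ x₀ ((fderiv ℝ f₀ x₀ + ∑ j : {j : Fin (n-1) // j ≠ k},
          u₀ j.1 • fderiv ℝ (f j.1) x₀) (f₀ x₀ + ∑ i, u₀ i • f i x₀)) +
        fderiv ℝ (fderiv ℝ ψ₀) x₀ (f₀ x₀ + ∑ i, u₀ i • f i x₀)
          (f₀ x₀ + ∑ j : {j : Fin (n-1) // j ≠ k}, u₀ j.1 • f j.1 x₀) +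
        ∑ j : {j : Fin (n-1) // j ≠ k}, v j • fderiv ℝ ψ₀ x₀ (f j.1 x₀)) Mv v₀ := by
    have hbig : HasFDerivAt (fun v : EuclideanSpace ℝ {j : Fin (n-1) // j ≠ k} =>
        (fderiv ℝ ψ₀ x₀ ((fderiv ℝ f₀ x₀ + ∑ j : {j : Fin (n-1) // j ≠ k},
            u₀ j.1 • fderiv ℝ (f j.1) x₀) (f₀ x₀ + ∑ i, u₀ i • f i x₀)) +
          fderiv ℝ (fderiv ℝ ψ₀) x₀ (f₀ x₀ + ∑ i, u₀ i • f i x₀)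
            (f₀ x₀ + ∑ j : {j : Fin (n-1) // j ≠ k}, u₀ j.1 • f j.1 x₀)) + Mv v) Mv v₀ :=
      (Mv.hasFDerivAt).const_add _
    refine hbig.congr_of_eventuallyEq (Filter.Eventually.of_forall fun v => ?_)
    simp [hMv, add_assoc, hAdef]
  have hdirectv : HasFDerivAt (fun v : EuclideanSpace ℝ {j : Fin (n-1) // j ≠ k} =>
      Gmap (x₀, u₀, v))
      ((0 : EuclideanSpace ℝ {j : Fin (n-1) // j ≠ k} →L[ℝ]
          EuclideanSpace ℝ (Fin (n-1))).prod
        ((0 : EuclideanSpace ℝ {j : Fin (n-1) // j ≠ k} →L[ℝ]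
            EuclideanSpace ℝ (Fin (n-1))).prod Mv)) v₀ :=
    (hasFDerivAt_const (ψ₀ x₀) v₀).prodMk ((hasFDerivAt_const
      (fderiv ℝ ψ₀ x₀ (f₀ x₀ + ∑ j : {j : Fin (n-1) // j ≠ k}, u₀ j.1 • f j.1 x₀)) v₀).prodMk hc3v)
  have hNv := hsliceNv.unique hdirectv
  have hNveval : ∀ δv, N (0, 0, δv) = (0, 0, Mv δv) := by
    intro δv
    have h := DFunLike.congr_fun hNv δv
    simpa using h
  -- ## Step G : linear algebra
  have hfinE : Module.finrank ℝ (EuclideanSpace ℝ (Fin n)) = n := by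
    simp [finrank_euclideanSpace]
  have hfinF : Module.finrank ℝ (EuclideanSpace ℝ (Fin (n-1))) = n - 1 := by
    simp [finrank_euclideanSpace]
  have hcardV : Fintype.card {j : Fin (n-1) // j ≠ k} = n - 2 := by
    have h := Fintype.card_subtype_compl (fun j : Fin (n-1) => j = k)
    simp only [Fintype.card_subtype_eq, Fintype.card_fin] at h
    have : Fintype.card {j : Fin (n-1) // j ≠ k} = Fintype.card {j : Fin (n-1) // ¬ j = k} := rfl
    rw [this, h]
    omega
  set cFam : Option (Fin (n-1)) → EuclideanSpace ℝ (Fin n) :=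
    fun o => o.elim w' (fun i => f i x₀) with hcFam
  have hrange : Set.range cFam = Set.range (fun i => f i x₀) ∪ {w'} := by
    ext x
    constructor
    · rintro ⟨o, rfl⟩
      cases o with
      | none => exact Or.inr rfl
      | some i => exact Or.inl ⟨i, rfl⟩
    · rintro (⟨i, rfl⟩ | rfl)
      · exact ⟨some i, rfl⟩
      · exact ⟨none, rfl⟩
  have hspan' : ⊤ ≤ Submodule.span ℝ (Set.range cFam) := by rw [hrange, hspan]
  have hcardc : Fintype.card (Option (Fin (n-1))) = Module.finrank ℝ (EuclideanSpace ℝ (Fin n)) := by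
    rw [hfinE]; simp; omega
  have hcli : LinearIndependent ℝ cFam :=
    linearIndependent_of_top_le_span_of_card_eq_finrank hspan' hcardc
  have hFkne : Fk ≠ 0 := by
    have h := hcli.ne_zero (some k)
    simpa [hcFam] using h
  -- kernel of A is spanned by `Fk`
  have hker : ∀ x : EuclideanSpace ℝ (Fin n), A x = 0 → ∃ t : ℝ, x = t • Fk := by
    have h1 : LinearMap.range (A : EuclideanSpace ℝ (Fin n) →ₗ[ℝ]
        EuclideanSpace ℝ (Fin (n-1))) = ⊤ := LinearMap.range_eq_top.mpr (by simpa using hsurj)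
    have h2 := LinearMap.finrank_range_add_finrank_ker
      (A : EuclideanSpace ℝ (Fin n) →ₗ[ℝ] EuclideanSpace ℝ (Fin (n-1)))
    rw [h1, finrank_top, hfinE, hfinF] at h2
    have hkerrank : Module.finrank ℝ
        (LinearMap.ker (A : EuclideanSpace ℝ (Fin n) →ₗ[ℝ] EuclideanSpace ℝ (Fin (n-1)))) = 1 := by
      omega
    have hFkker : Fk ∈ LinearMap.ker
        (A : EuclideanSpace ℝ (Fin n) →ₗ[ℝ] EuclideanSpace ℝ (Fin (n-1))) := by
      have := hfi x₀ hx₀U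
      simpa using this
    have hle : Submodule.span ℝ {Fk} ≤ LinearMap.ker
        (A : EuclideanSpace ℝ (Fin n) →ₗ[ℝ] EuclideanSpace ℝ (Fin (n-1))) := by
      rw [Submodule.span_singleton_le_iff_mem]; exact hFkker
    have heq : Submodule.span ℝ {Fk} = LinearMap.ker
        (A : EuclideanSpace ℝ (Fin n) →ₗ[ℝ] EuclideanSpace ℝ (Fin (n-1))) :=
      Submodule.eq_of_le_of_finrank_eq hle (by rw [finrank_span_singleton hFkne, hkerrank])
    intro x hx
    have hxker : x ∈ LinearMap.ker
        (A : EuclideanSpace ℝ (Fin n) →ₗ[ℝ] EuclideanSpace ℝ (Fin (n-1))) := by simpa using hx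
    rw [← heq] at hxker
    obtain ⟨t, ht⟩ := Submodule.mem_span_singleton.mp hxker
    exact ⟨t, ht.symm⟩
  -- the n-1 images are independent
  set dFam : Option {j : Fin (n-1) // j ≠ k} → EuclideanSpace ℝ (Fin (n-1)) :=
    fun o => o.elim (A w') (fun j => A (f j.1 x₀)) with hdFam
  have hdli : LinearIndependent ℝ dFam := by
    rw [Fintype.linearIndependent_iff]
    intro gc hgc
    rw [Fintype.sum_option] at hgc
    have hsum : A (gc none • w' + ∑ j : {j : Fin (n-1) // j ≠ k}, gc (some j) • f j.1 x₀) = 0 := by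
      rw [map_add, map_smul, map_sum]
      simp only [map_smul]
      simpa [hdFam] using hgc
    obtain ⟨t, ht⟩ := hker _ hsum
    set GC : Option (Fin (n-1)) → ℝ :=
      fun o => o.elim (gc none) (fun i => if h : i = k then -t else gc (some ⟨i, h⟩)) with hGC
    have hzero : ∑ o, GC o • cFam o = 0 := by
      rw [Fintype.sum_option, sum_split_ne k (fun i => GC (some i) • cFam (some i))]
      have h1 : GC (some k) • cFam (some k) = -t • Fk := by simp [hGC, hcFam, hFk]
      have h2 : ∀ j : {j : Fin (n-1) // j ≠ k}, GC (some j.1) • cFam (some j.1)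
          = gc (some j) • f j.1 x₀ := by
        intro j
        simp [hGC, hcFam, dif_neg j.2]
      rw [h1, Finset.sum_congr rfl (fun j _ => h2 j)]
      have hGCnone : GC none • cFam none = gc none • w' := by simp [hGC, hcFam]
      rw [hGCnone]
      linear_combination (norm := module) ht
    have hall := Fintype.linearIndependent_iff.mp hcli GC hzero
    intro o
    cases o with
    | none => simpa [hGC] using hall none
    | some j =>
      have h := hall (some j.1)
      simp only [hGC, Option.elim, dif_neg j.2] at h
      simpa using h
  -- ## Step H : injectivity of N
  have hzero : ∀ z : EuclideanSpace ℝ (Fin n) × EuclideanSpace ℝ (Fin (n - 1)) ×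
      EuclideanSpace ℝ {j : Fin (n - 1) // j ≠ k}, N z = 0 → z = 0 := by
    rintro ⟨δx, δu, δv⟩ hz
    have hdecomp : ((δx, δu, δv) : EuclideanSpace ℝ (Fin n) × EuclideanSpace ℝ (Fin (n - 1)) ×
        EuclideanSpace ℝ {j : Fin (n - 1) // j ≠ k}) = (δx, 0, 0) + (0, δu, 0) + (0, 0, δv) := by
      simp [Prod.ext_iff]
    rw [hdecomp, map_add, map_add, hNxeval, hNueval, hNveval] at hz
    rw [Prod.mk_add_mk, Prod.mk_add_mk, Prod.mk_add_mk, Prod.mk_add_mk, Prod.mk_eq_zero,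
      Prod.mk_eq_zero] at hz
    obtain ⟨e1, e23⟩ := hz
    obtain ⟨e2, e3⟩ := e23
    have hAδx : A δx = 0 := by simpa using e1
    obtain ⟨t, ht⟩ := hker δx hAδx
    -- second block
    have hsum2 : ∑ o, (fun o => Option.elim o (-t) (fun j => δu j.1) : Option {j : Fin (n-1) // j ≠ k} → ℝ) o • dFam o = 0 := by
      rw [Fintype.sum_option]
      simp only [hdFam, Option.elim]
      rw [ht] at e2
      simp only [map_smul, ContinuousLinearMap.smul_apply, hLhE, hRk, euclSum_apply,
        euclRestr_apply, map_sum, add_zero] at e2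
      linear_combination (norm := module) e2 - t • hkey
    have hz2 := Fintype.linearIndependent_iff.mp hdli _ hsum2
    have ht0 : t = 0 := by
      have := hz2 none
      simp only [Option.elim] at this
      linarith
    have hδu0 : ∀ j : {j : Fin (n-1) // j ≠ k}, δu j.1 = 0 := fun j => by
      have := hz2 (some j); simpa using this
    have hδx0 : δx = 0 := by rw [ht, ht0, zero_smul]
    have hδu_single : δu = EuclideanSpace.single k (δu k) := by
      ext i
      rcases eq_or_ne i k with rfl | hik
      · simp [EuclideanSpace.single_apply]
      · simp [EuclideanSpace.single_apply, hik, hδu0 ⟨i, hik⟩]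
    -- third block
    have e3' : Du δu + Mv δv = 0 := by
      rw [hδx0] at e3
      simpa using e3
    rw [hδu_single, hDuk (δu k)] at e3'
    have hsum3 : ∑ o, (fun o => Option.elim o (-(δu k)) (fun j => δv j) : Option {j : Fin (n-1) // j ≠ k} → ℝ) o • dFam o = 0 := by
      rw [Fintype.sum_option]
      simp only [hdFam, Option.elim]
      rw [hkey] at e3'
      simp only [hMv, euclSum_apply] at e3'
      linear_combination (norm := module) e3'
    have hz3 := Fintype.linearIndependent_iff.mp hdli _ hsum3
    have hδuk : δu k = 0 := by
      have := hz3 none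
      simp only [Option.elim] at this
      linarith
    have hδv0 : δv = 0 := by
      ext j
      have := hz3 (some j)
      simpa using this
    have hδu00 : δu = 0 := by rw [hδu_single, hδuk]; ext i; simp [EuclideanSpace.single_apply]
    simp [hδx0, hδu00, hδv0, Prod.ext_iff]
  have hinj : Function.Injective N := by
    intro a b hab
    have := hzero (a - b) (by rw [map_sub, hab, sub_self])
    exact sub_eq_zero.mp this
  -- ## Step I : assembling the continuous linear equivalence
  have hdim : Module.finrank ℝ (EuclideanSpace ℝ (Fin n) × EuclideanSpace ℝ (Fin (n - 1)) ×
      EuclideanSpace ℝ {j : Fin (n - 1) // j ≠ k}) =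
      Module.finrank ℝ (EuclideanSpace ℝ (Fin (n - 1)) × EuclideanSpace ℝ (Fin (n - 1)) ×
        EuclideanSpace ℝ (Fin (n - 1))) := by
    simp only [Module.finrank_prod, hfinE, hfinF, finrank_euclideanSpace, hcardV]
    omega
  have hinj' : Function.Injective (N : EuclideanSpace ℝ (Fin n) ×
      EuclideanSpace ℝ (Fin (n - 1)) × EuclideanSpace ℝ {j : Fin (n - 1) // j ≠ k} →ₗ[ℝ]
      EuclideanSpace ℝ (Fin (n - 1)) × EuclideanSpace ℝ (Fin (n - 1)) ×
        EuclideanSpace ℝ (Fin (n - 1))) := by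
    simpa using hinj
  refine ⟨((N : EuclideanSpace ℝ (Fin n) × EuclideanSpace ℝ (Fin (n - 1)) ×
      EuclideanSpace ℝ {j : Fin (n - 1) // j ≠ k} →ₗ[ℝ]
      EuclideanSpace ℝ (Fin (n - 1)) × EuclideanSpace ℝ (Fin (n - 1)) ×
        EuclideanSpace ℝ (Fin (n - 1))).linearEquivOfInjective hinj'
      hdim).toContinuousLinearEquiv, ?_⟩
  have hcoe : (((N : _ →ₗ[ℝ] _).linearEquivOfInjective hinj' hdim).toContinuousLinearEquiv :
      EuclideanSpace ℝ (Fin n) × EuclideanSpace ℝ (Fin (n - 1)) ×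
        EuclideanSpace ℝ {j : Fin (n - 1) // j ≠ k} →L[ℝ]
      EuclideanSpace ℝ (Fin (n - 1)) × EuclideanSpace ℝ (Fin (n - 1)) ×
        EuclideanSpace ℝ (Fin (n - 1))) = N := by
    refine ContinuousLinearMap.ext fun z => ?_
    rfl
  rw [hcoe]
  exact hΦ
end

section
/- Let K be a field, V a K-vector space, T : V → V a K-linear map, and W : ℕ → Submodule K V a sequence of subspaces such that W 0 is finite-dimensional and W (j+1) = W j ⊔ (W j).map T for all j ∈ ℕ. Then every W j is finite-dimensional, W j ≤ W (j+1) for all j, and for every j ≥ 1 one has finrank(W (j+1)) + finrank(W (j−1)) ≤ 2 · finrank(W j); equivalently, the sequence of dimension increments r_j = finrank(W j) − finrank(W (j−1)) is non-increasing. -/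
open Module

/- Put `r_j = dim W_j - dim W_{j-1}`. Since `T(W_{j-1}) ⊆ W_j ∩ T(W_j)`, the dimension formula
for `W_{j+1} = W_j + T(W_j)` gives `r_{j+1} ≤ dim T(W_j) - dim T(W_{j-1})`. Writing
`W_j = W_{j-1} ⊕ C`, we have `T(W_j) = T(W_{j-1}) + T(C)`, so this is at most `dim C = r_j`. -/

namespace Submodule

variable {K V : Type*} [Field K] [AddCommGroup V] [Module K V]

theorem finrank_map_add_finrank_le_finrank_map_add_finrank
    {V₂ : Type*} [AddCommGroup V₂] [Module K V₂] (f : V →ₗ[K] V₂)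
    {A B : Submodule K V} [FiniteDimensional K B] (hAB : A ≤ B) :
    finrank K (B.map f) + finrank K A ≤ finrank K (A.map f) + finrank K B := by
  obtain ⟨C, hC⟩ := A.exists_isCompl
  have : FiniteDimensional K A := finiteDimensional_of_le hAB
  have : FiniteDimensional K ↥(B ⊓ C) := finiteDimensional_of_le inf_le_left
  have hsup : A ⊔ B ⊓ C = B := by
    rw [inf_comm, ← sup_inf_assoc_of_le C hAB, hC.sup_eq_top, top_inf_eq]
  have hdisj : A ⊓ (B ⊓ C) = ⊥ := (hC.disjoint.mono_right inf_le_right).eq_bot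
  have hdim := finrank_sup_add_finrank_inf_eq A (B ⊓ C)
  rw [hsup, hdisj, finrank_bot] at hdim
  have hmap : finrank K (B.map f) ≤ finrank K (A.map f) + finrank K ((B ⊓ C).map f) := by
    have := finrank_add_le_finrank_add_finrank (A.map f) ((B ⊓ C).map f)
    rwa [← map_sup, hsup] at this
  have hC_map := finrank_map_le f (B ⊓ C)
  omega

theorem finrank_sup_map_add_finrank_le_two_mul (T : V →ₗ[K] V) {A B : Submodule K V}
    [FiniteDimensional K B] (hB : B = A ⊔ A.map T) :
    finrank K ↥(B ⊔ B.map T) + finrank K A ≤ 2 * finrank K B := by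
  have hAB : A ≤ B := hB ▸ le_sup_left
  have hTA : A.map T ≤ B ⊓ B.map T := le_inf (hB ▸ le_sup_right) (map_mono hAB)
  have : FiniteDimensional K ↥(B ⊓ B.map T) := finiteDimensional_of_le inf_le_left
  have hTA_le := finrank_mono hTA
  have hdim := finrank_sup_add_finrank_inf_eq B (B.map T)
  have hjump := finrank_map_add_finrank_le_finrank_map_add_finrank T hAB
  omega

end Submodule

/-- For a tower of subspaces `W (j+1) = W j ⊔ T(W j)` starting from a
finite-dimensional `W 0`, all the `W j` are finite-dimensional, the tower is increasing,
and the dimension increments are non-increasing: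
`finrank (W (j+1)) + finrank (W (j-1)) ≤ 2 * finrank (W j)` for `j ≥ 1`. -/
theorem tower_dimension_jumps_nonincreasing
    (K V : Type*) [Field K] [AddCommGroup V] [Module K V]
    (T : V →ₗ[K] V) (W : ℕ → Submodule K V)
    (h0 : FiniteDimensional K (W 0))
    (hW : ∀ j : ℕ, W (j + 1) = W j ⊔ (W j).map T) :
    (∀ j : ℕ, FiniteDimensional K (W j)) ∧
    (∀ j : ℕ, W j ≤ W (j + 1)) ∧
    (∀ j : ℕ, 1 ≤ j →
      finrank K (W (j + 1)) + finrank K (W (j - 1)) ≤ 2 * finrank K (W j)) := by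
  have hfin : ∀ j, FiniteDimensional K (W j) := by
    intro j
    induction j with
    | zero => exact h0
    | succ j ih => rw [hW j]; infer_instance
  refine ⟨hfin, fun j => hW j ▸ le_sup_left, ?_⟩
  rintro (_ | j) hj
  · omega
  · rw [hW (j + 1)]
    exact Submodule.finrank_sup_map_add_finrank_le_two_mul T (hW j)
end
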